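/- Let Y₁ = 1 and let Y₂, Y₃, Y₄, Y₁₄, Y₁₅, Y₁₆, Y₂₀, Y₂₁, Y₂₂ be nonnegative integers satisfying the following eighteen inequalities: 0 ≤ 50Y₁+50Y₂+50Y₃−50Y₄; 0 ≤ 7Y₁−5Y₂−2Y₃+11Y₁₄+2Y₁₅−4Y₁₆−35Y₂₀−20Y₂₁+22Y₂₂; 0 ≤ 4Y₁−Y₂−3Y₃+7Y₁₄−2Y₁₅−Y₁₆−10Y₂₀+4Y₂₁+2Y₂₂; 0 ≤ 21Y₁+11Y₂−32Y₃+638Y₁₄+2Y₁₅+11Y₁₆−761Y₂₀+12Y₂₁+342Y₂₂; 0 ≤ 38Y₁+10Y₂−48Y₃−1386Y₁₄+3Y₁₅−6Y₁₆+514Y₂₀+80Y₂₁+733Y₂₂; 0 ≤ 27Y₁−101Y₂+74Y₃−5533Y₁₄+2Y₁₅+16Y₁₆−10695Y₂₀+300Y₂₁+150Y₂₂; 0 ≤ 76Y₁+20Y₂+2Y₃+50Y₄−1848Y₁₄+3Y₁₅+4Y₁₆−6174Y₂₀−162Y₂₁−1555Y₂₂; 0 ≤ 20Y₁+78Y₃+50Y₄−682Y₁₄−4Y₁₅−14Y₁₆+4514Y₂₀+112Y₂₁+1120Y₂₂;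 0 ≤ 595Y₁−425Y₂−170Y₃−45177Y₁₄−6Y₁₅+56Y₁₆+184289Y₂₀−644Y₂₁−54530Y₂₂; 0 ≤ 320Y₁−236Y₂−84Y₃+6468Y₁₄+9Y₁₅−48Y₁₆−34736Y₂₀−1120Y₂₁+6998Y₂₂; 0 ≤ 112Y₁+50Y₂−162Y₃−649Y₁₄−2Y₁₅−15Y₁₆+21651Y₂₀+420Y₂₁−3038Y₂₂; 0 ≤ 98Y₁+34Y₂−132Y₃−3010Y₁₄−4Y₁₅+6Y₁₆+17990Y₂₀−175Y₂₁+842Y₂₂; 0 ≤ 532Y₁+192Y₂−724Y₃+110924Y₁₄+5Y₁₅+88Y₁₆−226308Y₂₀+481Y₂₁+45493Y₂₂; 0 ≤ 632Y₁+245Y₂−877Y₃−200684Y₁₄+16Y₁₅−32Y₁₆+128651Y₂₀+2144Y₂₁+79472Y₂₂; 0 ≤ 410Y₁−1526Y₂+1116Y₃−504274Y₁₄+5Y₁₅+86Y₁₆−1555890Y₂₀+6480Y₂₁+11658Y₂₂; 0 ≤ −2Y₁−6Y₂+8Y₃+12Y₁₄+3Y₁₅+4Y₁₆+42Y₂₀−2Y₂₁+13Y₂₂;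 0 ≤ 19Y₁−60Y₂+41Y₃+1122Y₁₄+4Y₁₅−8Y₁₆+271Y₂₀+56Y₂₁−1076Y₂₂; 0 ≤ 7Y₁−18Y₂+11Y₃−77Y₁₄−2Y₁₅+Y₁₆+189Y₂₀−28Y₂₁+194Y₂₂. Then Y₂ ≤ 1, Y₃ ≤ 1, Y₄ ≤ 3, Y₁₅ ≤ 2, Y₁₆ ≤ 2, and Y₁₄ = Y₂₀ = Y₂₁ = Y₂₂ = 0. -/
import Mathlib


theorem stmt_19
    (Y1 Y2 Y3 Y4 Y14 Y15 Y16 Y20 Y21 Y22 : ℤ)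
    (hY1 : Y1 = 1)
    (h2 : 0 ≤ Y2) (h3 : 0 ≤ Y3) (h4 : 0 ≤ Y4) (h14 : 0 ≤ Y14)
    (h15 : 0 ≤ Y15) (h16 : 0 ≤ Y16) (h20 : 0 ≤ Y20) (h21 : 0 ≤ Y21)
    (h22 : 0 ≤ Y22)
    (e1 : 0 ≤ 50*Y1 + 50*Y2 + 50*Y3 - 50*Y4)
    (e2 : 0 ≤ 7*Y1 - 5*Y2 - 2*Y3 + 11*Y14 + 2*Y15 - 4*Y16 - 35*Y20 - 20*Y21 + 22*Y22)
    (e3 : 0 ≤ 4*Y1 - Y2 - 3*Y3 + 7*Y14 - 2*Y15 - Y16 - 10*Y20 + 4*Y21 + 2*Y22)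
    (e4 : 0 ≤ 21*Y1 + 11*Y2 - 32*Y3 + 638*Y14 + 2*Y15 + 11*Y16 - 761*Y20 + 12*Y21 + 342*Y22)
    (e5 : 0 ≤ 38*Y1 + 10*Y2 - 48*Y3 - 1386*Y14 + 3*Y15 - 6*Y16 + 514*Y20 + 80*Y21 + 733*Y22)
    (e6 : 0 ≤ 27*Y1 - 101*Y2 + 74*Y3 - 5533*Y14 + 2*Y15 + 16*Y16 - 10695*Y20 + 300*Y21 + 150*Y22)
    (e7 : 0 ≤ 76*Y1 + 20*Y2 + 2*Y3 + 50*Y4 - 1848*Y14 + 3*Y15 + 4*Y16 - 6174*Y20 - 162*Y21 - 1555*Y22)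
    (e8 : 0 ≤ 20*Y1 + 78*Y3 + 50*Y4 - 682*Y14 - 4*Y15 - 14*Y16 + 4514*Y20 + 112*Y21 + 1120*Y22)
    (e9 : 0 ≤ 595*Y1 - 425*Y2 - 170*Y3 - 45177*Y14 - 6*Y15 + 56*Y16 + 184289*Y20 - 644*Y21 - 54530*Y22)
    (e10 : 0 ≤ 320*Y1 - 236*Y2 - 84*Y3 + 6468*Y14 + 9*Y15 - 48*Y16 - 34736*Y20 - 1120*Y21 + 6998*Y22)
    (e11 : 0 ≤ 112*Y1 + 50*Y2 - 162*Y3 - 649*Y14 - 2*Y15 - 15*Y16 + 21651*Y20 + 420*Y21 - 3038*Y22)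
    (e12 : 0 ≤ 98*Y1 + 34*Y2 - 132*Y3 - 3010*Y14 - 4*Y15 + 6*Y16 + 17990*Y20 - 175*Y21 + 842*Y22)
    (e13 : 0 ≤ 532*Y1 + 192*Y2 - 724*Y3 + 110924*Y14 + 5*Y15 + 88*Y16 - 226308*Y20 + 481*Y21 + 45493*Y22)
    (e14 : 0 ≤ 632*Y1 + 245*Y2 - 877*Y3 - 200684*Y14 + 16*Y15 - 32*Y16 + 128651*Y20 + 2144*Y21 + 79472*Y22)
    (e15 : 0 ≤ 410*Y1 - 1526*Y2 + 1116*Y3 - 504274*Y14 + 5*Y15 + 86*Y16 - 1555890*Y20 + 6480*Y21 + 11658*Y22)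
    (e16 : 0 ≤ -2*Y1 - 6*Y2 + 8*Y3 + 12*Y14 + 3*Y15 + 4*Y16 + 42*Y20 - 2*Y21 + 13*Y22)
    (e17 : 0 ≤ 19*Y1 - 60*Y2 + 41*Y3 + 1122*Y14 + 4*Y15 - 8*Y16 + 271*Y20 + 56*Y21 - 1076*Y22)
    (e18 : 0 ≤ 7*Y1 - 18*Y2 + 11*Y3 - 77*Y14 - 2*Y15 + Y16 + 189*Y20 - 28*Y21 + 194*Y22) :
    Y2 ≤ 1 ∧ Y3 ≤ 1 ∧ Y4 ≤ 3 ∧ Y15 ≤ 2 ∧ Y16 ≤ 2 ∧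
      Y14 = 0 ∧ Y20 = 0 ∧ Y21 = 0 ∧ Y22 = 0 := by
  subst hY1
  refine ⟨by linarith, by linarith, by linarith, by linarith, by linarith,
    le_antisymm (by linarith) h14, le_antisymm (by linarith) h20,
    le_antisymm (by linarith) h21, le_antisymm (by linarith) h22⟩
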